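/- arXiv:2305.10604 — 5 statements merged into one kernel-verified Lean document; each statement's English description precedes it below -/
import Mathlib

section
/- The natural ring homomorphism from the fiber product Q_m ×_{Q_m/(x^2)} k to Q_m (composition of the inclusion into Q_m × k with the projection to Q_m) is injective, and its image is exactly Q_{m+1} = k[x^2, x^{2m+3}]. -/
open Polynomial

private lemma aux_decomp {k : Type*} [Field k] (m : ℕ) {g : k[X]}
    (hg : g ∈ Algebra.adjoin k ({X ^ 2, X ^ (2 * m + 1)} : Set k[X])) :
    ∃ u v : k[X], u ∈ Algebra.adjoin k ({X ^ 2, X ^ (2 * m + 3)} : Set k[X]) ∧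
      v ∈ Algebra.adjoin k ({X ^ 2, X ^ (2 * m + 3)} : Set k[X]) ∧
      g = u + X ^ (2 * m + 1) * v := by
  have hX2 : (X ^ 2 : k[X]) ∈ Algebra.adjoin k ({X ^ 2, X ^ (2 * m + 3)} : Set k[X]) :=
    Algebra.subset_adjoin (Set.mem_insert _ _)
  induction hg using Algebra.adjoin_induction with
  | mem x hx =>
    rcases hx with h | h
    · exact ⟨X ^ 2, 0, hX2, Subalgebra.zero_mem _, by rw [h]; ring⟩
    · refine ⟨0, 1, Subalgebra.zero_mem _, Subalgebra.one_mem _, ?_⟩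
      rw [Set.mem_singleton_iff.mp h]; ring
  | algebraMap r => exact ⟨algebraMap k k[X] r, 0, Subalgebra.algebraMap_mem _ _,
      Subalgebra.zero_mem _, by ring⟩
  | add x y hx hy ihx ihy =>
    obtain ⟨u, v, hu, hv, rfl⟩ := ihx
    obtain ⟨u', v', hu', hv', rfl⟩ := ihy
    exact ⟨u + u', v + v', add_mem hu hu', add_mem hv hv', by ring⟩
  | mul x y hx hy ihx ihy =>
    obtain ⟨u, v, hu, hv, rfl⟩ := ihx
    obtain ⟨u', v', hu', hv', rfl⟩ := ihy
    have hpow : (X : k[X]) ^ (4 * m + 2) ∈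
        Algebra.adjoin k ({X ^ 2, X ^ (2 * m + 3)} : Set k[X]) := by
      have : (X : k[X]) ^ (4 * m + 2) = (X ^ 2) ^ (2 * m + 1) := by ring
      rw [this]; exact pow_mem hX2 _
    refine ⟨u * u' + X ^ (4 * m + 2) * (v * v'), u * v' + v * u',
      add_mem (mul_mem hu hu') (mul_mem hpow (mul_mem hv hv')),
      add_mem (mul_mem hu hv') (mul_mem hv hu'), by ring⟩

private lemma aux_fwd {k : Type*} [Field k] (m : ℕ) {g : k[X]}
    (hg : g ∈ Algebra.adjoin k ({X ^ 2, X ^ (2 * m + 1)} : Set k[X])) :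
    X ^ 2 * g ∈ Algebra.adjoin k ({X ^ 2, X ^ (2 * m + 3)} : Set k[X]) := by
  obtain ⟨u, v, hu, hv, rfl⟩ := aux_decomp m hg
  have hX2 : (X ^ 2 : k[X]) ∈ Algebra.adjoin k ({X ^ 2, X ^ (2 * m + 3)} : Set k[X]) :=
    Algebra.subset_adjoin (Set.mem_insert _ _)
  have hX3 : (X ^ (2 * m + 3) : k[X]) ∈
      Algebra.adjoin k ({X ^ 2, X ^ (2 * m + 3)} : Set k[X]) :=
    Algebra.subset_adjoin (Set.mem_insert_of_mem _ rfl)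
  have : X ^ 2 * (u + X ^ (2 * m + 1) * v) = X ^ 2 * u + X ^ (2 * m + 3) * v := by ring
  rw [this]
  exact add_mem (mul_mem hX2 hu) (mul_mem hX3 hv)

private lemma aux_bwd {k : Type*} [Field k] (m : ℕ) {p : k[X]}
    (hp : p ∈ Algebra.adjoin k ({X ^ 2, X ^ (2 * m + 3)} : Set k[X])) :
    ∃ (c : k) (g : k[X]), g ∈ Algebra.adjoin k ({X ^ 2, X ^ (2 * m + 1)} : Set k[X]) ∧
      p = C c + X ^ 2 * g := by
  have hX2 : (X ^ 2 : k[X]) ∈ Algebra.adjoin k ({X ^ 2, X ^ (2 * m + 1)} : Set k[X]) :=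
    Algebra.subset_adjoin (Set.mem_insert _ _)
  have hXm : (X ^ (2 * m + 1) : k[X]) ∈
      Algebra.adjoin k ({X ^ 2, X ^ (2 * m + 1)} : Set k[X]) :=
    Algebra.subset_adjoin (Set.mem_insert_of_mem _ rfl)
  induction hp using Algebra.adjoin_induction with
  | mem x hx =>
    rcases hx with h | h
    · exact ⟨0, 1, Subalgebra.one_mem _, by rw [h]; simp⟩
    · exact ⟨0, X ^ (2 * m + 1), hXm, by rw [Set.mem_singleton_iff.mp h]; simp; ring⟩
  | algebraMap r => exact ⟨r, 0, Subalgebra.zero_mem _, by simp [Polynomial.algebraMap_eq]⟩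
  | add x y hx hy ihx ihy =>
    obtain ⟨c, g, hg, rfl⟩ := ihx
    obtain ⟨c', g', hg', rfl⟩ := ihy
    exact ⟨c + c', g + g', add_mem hg hg', by rw [C_add]; ring⟩
  | mul x y hx hy ihx ihy =>
    obtain ⟨c, g, hg, rfl⟩ := ihx
    obtain ⟨c', g', hg', rfl⟩ := ihy
    refine ⟨c * c', C c * g' + C c' * g + X ^ 2 * (g * g'),
      add_mem (add_mem (mul_mem ?_ hg') (mul_mem ?_ hg)) (mul_mem hX2 (mul_mem hg hg')),
      by rw [C_mul]; ring⟩
    · exact Subalgebra.algebraMap_mem _ c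
    · exact Subalgebra.algebraMap_mem _ c'

/-- The natural ring homomorphism from the fiber product `Q_m ×_{Q_m/(x^2)} k` to `Q_m`
(the composition of the inclusion into `Q_m × k` with the projection to `Q_m`) is
injective, and its image is exactly `Q_{m+1} = k[x^2, x^(2m+3)]`.  Here the fiber
product is realized as the set of pairs `(f, c)` with `f ∈ Q_m`, `c ∈ k`, such that
`f - c⬝1` lies in the ideal of `Q_m` generated by `x^2`. -/
theorem stmt_5 (k : Type*) [Field k] (m : ℕ)
    (A : Subalgebra k k[X])
    (hA : A = Algebra.adjoin k ({X ^ 2, X ^ (2 * m + 1)} : Set k[X]))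
    (a : A) (ha : (a : k[X]) = X ^ 2) :
    (∀ f f' : A, ∀ c c' : k,
        f - algebraMap k A c ∈ Ideal.span {a} →
        f' - algebraMap k A c' ∈ Ideal.span {a} →
        (f : k[X]) = (f' : k[X]) → (f = f' ∧ c = c')) ∧
    ((fun f : A => (f : k[X])) ''
        {f : A | ∃ c : k, f - algebraMap k A c ∈ Ideal.span {a}} =
      (Algebra.adjoin k ({X ^ 2, X ^ (2 * m + 3)} : Set k[X]) : Set k[X])) := by
  have key : ∀ (f : A) (c : k), f - algebraMap k A c ∈ Ideal.span {a} →
      c = (f : k[X]).coeff 0 := by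
    intro f c hf
    obtain ⟨g, hg⟩ := Ideal.mem_span_singleton.mp hf
    have hco : (f : k[X]) - C c = X ^ 2 * (g : k[X]) := by
      have := congrArg (Subtype.val) hg
      push_cast at this
      simpa [ha, Polynomial.algebraMap_eq] using this
    have := congrArg (fun p : k[X] => p.coeff 0) hco
    simp [Polynomial.mul_coeff_zero, coeff_X_pow] at this
    exact (sub_eq_zero.mp this).symm
  constructor
  · intro f f' c c' hf hf' hcoe
    have hff : f = f' := Subtype.ext hcoe
    refine ⟨hff, ?_⟩
    rw [key f c hf, key f' c' hf', hcoe]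
  · ext p
    constructor
    · rintro ⟨f, ⟨c, hc⟩, rfl⟩
      obtain ⟨g, hg⟩ := Ideal.mem_span_singleton.mp hc
      have hco : (f : k[X]) = C c + X ^ 2 * (g : k[X]) := by
        have := congrArg (Subtype.val) hg
        push_cast at this
        rw [ha, Polynomial.algebraMap_eq] at this
        linear_combination this
      have hgA : (g : k[X]) ∈ Algebra.adjoin k ({X ^ 2, X ^ (2 * m + 1)} : Set k[X]) :=
        hA ▸ g.2
      show (f : k[X]) ∈ _
      rw [hco]
      exact add_mem (Subalgebra.algebraMap_mem _ c) (aux_fwd m hgA)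
    · intro hp
      obtain ⟨c, g, hg, rfl⟩ := aux_bwd m hp
      have hgA : g ∈ A := hA ▸ hg
      have hfA : C c + X ^ 2 * g ∈ A := by
        refine add_mem ?_ (mul_mem ?_ hgA)
        · exact Subalgebra.algebraMap_mem _ c
        · rw [← ha]; exact a.2
      refine ⟨⟨_, hfA⟩, ⟨c, ?_⟩, rfl⟩
      rw [Ideal.mem_span_singleton]
      refine ⟨⟨g, hgA⟩, ?_⟩
      apply Subtype.ext
      push_cast
      rw [ha, Polynomial.algebraMap_eq]
      ring
end

section
/- The exponential quasi-invariants of multiplicity m are precisely 𝒬_m = Z ⊕ Z·(z^{1/2}-z^{-1/2})^2 ⊕ ... ⊕ Z·(z^{1/2}-z^{-1/2})^{2(m-1)} ⊕ (z^{1/2}-z^{-1/2})^{2m}·Z[z,z^{-1}]; that is, f ∈ Z[z,z^{-1}] satisfies (1-z^2)^{-1}(f(z) - f(z^{-1})) ≡ 0 mod (1-z)^{2m} if and only if f lies in this set. -/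
open LaurentPolynomial


noncomputable def eps : LaurentPolynomial ℤ →+* ℤ :=
  AddMonoidAlgebra.liftNCRingHom (RingHom.id ℤ) 1 (fun _ _ => Commute.all _ _)

lemma eps_single (n : ℤ) (a : ℤ) : eps (AddMonoidAlgebra.single n a) = a := by
  have : eps (AddMonoidAlgebra.single n a) = (RingHom.id ℤ) a * (1 : Multiplicative ℤ →* ℤ) (Multiplicative.ofAdd n) :=
    AddMonoidAlgebra.liftNC_single _ _ _ _
  simpa using this

lemma eps_T (n : ℤ) : eps (T n) = 1 := eps_single n 1
lemma eps_C (a : ℤ) : eps (C a) = a := eps_single 0 a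

lemma T_ne_of_ne {a b : ℤ} (h : a ≠ b) : (T a : LaurentPolynomial ℤ) ≠ T b := by
  intro hh
  exact h (AddMonoidAlgebra.single_left_injective one_ne_zero hh)

lemma one_sub_T_one_ne : (1 - T 1 : LaurentPolynomial ℤ) ≠ 0 := by
  intro h
  have h1 : (T 0 : LaurentPolynomial ℤ) = T 1 := by rw [T_zero]; linear_combination h
  exact T_ne_of_ne (by norm_num) h1

lemma one_sub_T_two_ne : (1 - T 2 : LaurentPolynomial ℤ) ≠ 0 := by
  intro h
  have h1 : (T 0 : LaurentPolynomial ℤ) = T 2 := by rw [T_zero]; linear_combination h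
  exact T_ne_of_ne (by norm_num) h1

lemma w_eq : (T 1 - 2 + T (-1) : LaurentPolynomial ℤ) = T (-1) * (1 - T 1)^2 := by
  have h2 : (T 1 : LaurentPolynomial ℤ) * T 1 = T 2 := by rw [← T_add]; norm_num
  have h3 : (T 1 : LaurentPolynomial ℤ) * T (-1) = 1 := by rw [← T_add]; norm_num
  have h4 : (T 2 : LaurentPolynomial ℤ) * T (-1) = T 1 := by rw [← T_add]; norm_num
  ring_nf
  rw [sq, h2, h4, h3]
  ring

lemma invert_w : invert (T 1 - 2 + T (-1) : LaurentPolynomial ℤ) = T 1 - 2 + T (-1) := by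
  simp only [map_add, map_sub, invert_T, map_ofNat]
  ring

lemma dvd_T_sub_one (n : ℤ) : (1 - T 2 : LaurentPolynomial ℤ) ∣ (T (2*n) - 1) := by
  have key : ∀ k : ℕ, (1 - T 2 : LaurentPolynomial ℤ) ∣ (T (2*(k:ℤ)) - 1) := by
    intro k
    have ht : (T (2*(k:ℤ)) : LaurentPolynomial ℤ) = (T 2)^k := by rw [T_pow]; ring_nf
    rw [ht]
    have h := sub_dvd_pow_sub_pow (T 2 : LaurentPolynomial ℤ) 1 k
    simp only [one_pow] at h
    have e : (1 - T 2 : LaurentPolynomial ℤ) = -(T 2 - 1) := by ring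
    rw [e, neg_dvd]
    exact h
  rcases le_or_gt 0 n with hn | hn
  · obtain ⟨k, rfl⟩ := Int.eq_ofNat_of_zero_le hn
    exact key k
  · obtain ⟨k, hk⟩ := Int.eq_ofNat_of_zero_le (by omega : (0:ℤ) ≤ -n)
    have : (T (2*n) - 1 : LaurentPolynomial ℤ) = -T (2*n) * (T (2*(k:ℤ)) - 1) := by
      rw [neg_mul, mul_sub, ← T_add, mul_one]
      rw [show 2*n + 2*(k:ℤ) = 0 by omega, T_zero]
      ring
    rw [this]
    exact Dvd.dvd.mul_left (key k) _

lemma dvd_sub_invert (f : LaurentPolynomial ℤ) : (1 - T 2 : LaurentPolynomial ℤ) ∣ (f - invert f) := by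
  induction f using LaurentPolynomial.induction_on' with
  | add p q hp hq =>
    have : p + q - invert (p + q) = (p - invert p) + (q - invert q) := by
      rw [map_add]; ring
    rw [this]; exact dvd_add hp hq
  | C_mul_T n a =>
    have : C a * T n - invert (C a * T n) = C a * T (-n) * (T (2*n) - 1) := by
      rw [map_mul, invert_C, invert_T, mul_sub, mul_one, mul_assoc, ← T_add]
      ring_nf
    rw [this]
    exact (dvd_T_sub_one n).mul_left _

lemma eps_invert (f : LaurentPolynomial ℤ) : eps (invert f) = eps f := by
  induction f using LaurentPolynomial.induction_on' with
  | add p q hp hq => rw [map_add, map_add, map_add, hp, hq]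
  | C_mul_T n a => rw [map_mul, invert_C, invert_T, map_mul, map_mul, eps_T, eps_T]

lemma eps_toLaurent (p : Polynomial ℤ) : eps (Polynomial.toLaurent p) = p.eval 1 := by
  induction p using Polynomial.induction_on' with
  | add p q hp hq => rw [map_add, map_add, hp, hq, Polynomial.eval_add]
  | monomial n a =>
    rw [Polynomial.toLaurent_C_mul_T, map_mul, eps_C, eps_T, Polynomial.eval_monomial]
    simp

lemma dvd_of_eps_eq_zero {f : LaurentPolynomial ℤ} (h : eps f = 0) : (1 - T 1 : LaurentPolynomial ℤ) ∣ f := by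
  obtain ⟨n, p, hp⟩ := f.exists_T_pow
  have he : p.eval 1 = 0 := by
    rw [← eps_toLaurent, hp, map_mul, eps_T, mul_one, h]
  have hd : (Polynomial.X - 1 : Polynomial ℤ) ∣ p := by
    have := (Polynomial.dvd_iff_isRoot (p := p) (a := 1)).mpr he
    simpa using this
  have hd2 : (1 - T 1 : LaurentPolynomial ℤ) ∣ Polynomial.toLaurent p := by
    obtain ⟨q, hq⟩ := hd
    refine ⟨-(Polynomial.toLaurent q), ?_⟩
    rw [hq, map_mul, map_sub, Polynomial.toLaurent_X, Polynomial.toLaurent_one]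
    ring
  have : f = Polynomial.toLaurent p * T (-(n:ℤ)) := by
    rw [hp, mul_assoc, ← T_add]
    simp
  rw [this]
  exact hd2.mul_right _

instance : IsDomain (LaurentPolynomial ℤ) := NoZeroDivisors.to_isDomain _

lemma invert_sum_c (m : ℕ) (c : Fin m → ℤ) :
    invert (∑ i : Fin m, (c i : LaurentPolynomial ℤ) * (T 1 - 2 + T (-1)) ^ (i : ℕ)) =
      ∑ i : Fin m, (c i : LaurentPolynomial ℤ) * (T 1 - 2 + T (-1)) ^ (i : ℕ) := by
  rw [map_sum]
  refine Finset.sum_congr rfl fun i _ => ?_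
  rw [map_mul, map_intCast, map_pow, invert_w]

lemma hT11 : (T 1 : LaurentPolynomial ℤ) * T (-1) = 1 := by rw [← T_add]; norm_num

/-- The exponential quasi-invariants of multiplicity `m` for `W = ℤ/2` acting on
`ℤ[z,z⁻¹]` by `z ↦ z⁻¹` are exactly
`𝒬_m = ℤ ⊕ ℤ⬝w ⊕ ⋯ ⊕ ℤ⬝w^(m-1) ⊕ w^m⬝ℤ[z,z⁻¹]` where
`w = (z^(1/2) - z^(-1/2))^2 = z - 2 + z⁻¹`: that is, `f` satisfies
`(1-z²)⁻¹(f(z) - f(z⁻¹)) ≡ 0 mod (1-z)^(2m)` iff `f` lies in this set. -/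
theorem stmt_9 (m : ℕ) (f : LaurentPolynomial ℤ) :
    (∃ g : LaurentPolynomial ℤ,
        f - LaurentPolynomial.invert f = (1 - T 2) * g ∧ (1 - T 1) ^ (2 * m) ∣ g) ↔
      (∃ (c : Fin m → ℤ) (g : LaurentPolynomial ℤ),
        f = (∑ i : Fin m, (c i : LaurentPolynomial ℤ) * (T 1 - 2 + T (-1)) ^ (i : ℕ)) +
          (T 1 - 2 + T (-1)) ^ m * g) := by
  constructor
  · induction m generalizing f with
    | zero =>
      intro _
      exact ⟨Fin.elim0, f, by simp⟩
    | succ m IH =>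
      rintro ⟨g, hfg, hdvd⟩
      obtain ⟨c, h, hf⟩ := IH f ⟨g, hfg, dvd_trans (pow_dvd_pow _ (by omega)) hdvd⟩
      have h1 : f - invert f = (T 1 - 2 + T (-1)) ^ m * (h - invert h) := by
        rw [hf, map_add, invert_sum_c, map_mul, map_pow, invert_w]
        ring
      obtain ⟨g₀, hg₀⟩ := dvd_sub_invert h
      have hg : g = (T 1 - 2 + T (-1)) ^ m * g₀ := by
        apply mul_left_cancel₀ one_sub_T_two_ne
        linear_combination -hfg + h1 + ((T 1 - 2 + T (-1) : LaurentPolynomial ℤ)) ^ m * hg₀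
      have hwm : (T 1 - 2 + T (-1) : LaurentPolynomial ℤ) ^ m
          = T (-1) ^ m * (1 - T 1) ^ (2 * m) := by
        rw [w_eq, mul_pow, pow_mul]
      have hdg : (1 - T 1 : LaurentPolynomial ℤ) ^ 2 ∣ g₀ := by
        have h5 : (1 - T 1 : LaurentPolynomial ℤ) ^ (2*m) * ((1 - T 1) ^ 2)
            ∣ (1 - T 1) ^ (2*m) * (T (-1) ^ m * g₀) := by
          have e1 : (1 - T 1 : LaurentPolynomial ℤ) ^ (2*m) * ((1 - T 1) ^ 2)
              = (1 - T 1) ^ (2 * (m+1)) := by rw [← pow_add]; ring_nf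
          have e2 : (1 - T 1 : LaurentPolynomial ℤ) ^ (2*m) * (T (-1) ^ m * g₀) = g := by
            rw [hg, hwm]; ring
          rw [e1, e2]; exact hdvd
        have h6 := (mul_dvd_mul_iff_left (pow_ne_zero _ one_sub_T_one_ne)).mp h5
        have e3 : g₀ = T 1 ^ m * (T (-1) ^ m * g₀) := by
          rw [← mul_assoc, ← mul_pow, hT11, one_pow, one_mul]
        rw [e3]
        exact h6.mul_left _
      obtain ⟨u, hu⟩ := dvd_of_eps_eq_zero (f := h - C (eps h))
        (by rw [map_sub, eps_C]; ring)
      have huinv : invert h - C (eps h) = (1 - T (-1)) * invert u := by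
        have := congrArg invert hu
        rw [map_sub, invert_C, map_mul, map_sub, map_one, invert_T] at this
        simpa using this
      have h7 : h - invert h = (1 - T 1) * (u + T (-1) * invert u) := by
        have e4 : (1 - T (-1) : LaurentPolynomial ℤ) = -(T (-1)) * (1 - T 1) := by
          linear_combination -hT11
        linear_combination hu - huinv + (invert u) * e4 + 2 * (invert u) * hT11
      have hT2split : (1 - T 2 : LaurentPolynomial ℤ) = (1 - T 1) * (1 + T 1) := by
        have h2 : (T 1 : LaurentPolynomial ℤ) * T 1 = T 2 := by rw [← T_add]; norm_num
        linear_combination h2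
      have h8 : u + T (-1) * invert u = (1 + T 1) * g₀ := by
        apply mul_left_cancel₀ one_sub_T_one_ne
        linear_combination -h7 + hg₀ + g₀ * hT2split
      have h9 : eps u = 0 := by
        obtain ⟨v0, hv0⟩ := hdg
        have h8' := congrArg eps h8
        rw [hv0] at h8'
        simp only [map_add, map_mul, map_sub, map_pow, map_one, eps_T, eps_invert] at h8'
        omega
      obtain ⟨v, hv⟩ := dvd_of_eps_eq_zero h9
      have hTw : (1 - T 1 : LaurentPolynomial ℤ) ^ 2 = T 1 * (T 1 - 2 + T (-1)) := by
        rw [w_eq, ← mul_assoc, hT11, one_mul]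
      have hh : h = C (eps h) + (T 1 - 2 + T (-1)) * (T 1 * v) := by
        linear_combination hu + (1 - T 1 : LaurentPolynomial ℤ) * hv + v * hTw
      set e := eps h with he
      refine ⟨Fin.snoc c e, T 1 * v, ?_⟩
      rw [Fin.sum_univ_castSucc]
      simp only [Fin.snoc_castSucc, Fin.snoc_last, Fin.coe_castSucc, Fin.val_last]
      rw [hf, hh, eq_intCast LaurentPolynomial.C e]
      ring
  · rintro ⟨c, g, rfl⟩
    obtain ⟨g₀, hg₀⟩ := dvd_sub_invert g
    refine ⟨(T 1 - 2 + T (-1)) ^ m * g₀, ?_, ?_⟩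
    · rw [map_add, invert_sum_c, map_mul, map_pow, invert_w]
      linear_combination (T 1 - 2 + T (-1) : LaurentPolynomial ℤ) ^ m * hg₀
    · refine ⟨T (-1) ^ m * g₀, ?_⟩
      rw [w_eq, mul_pow, pow_mul]
      ring
end

section
/- The set 𝒬_m(W) of exponential quasi-invariants is a subring of Z[z,z^{-1}], and 𝒬_{m+1}(W) = Z + (z + z^{-1} - 2)·𝒬_m(W). -/
open LaurentPolynomial

/-- Evaluation of a Laurent polynomial at 1, as an algebra hom. -/
noncomputable def ev : LaurentPolynomial ℤ →ₐ[ℤ] ℤ := AddMonoidAlgebra.lift ℤ ℤ ℤ 1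

lemma ev_T (n : ℤ) : ev (T n) = 1 := by
  show AddMonoidAlgebra.lift ℤ ℤ ℤ 1 (AddMonoidAlgebra.single n 1) = 1
  rw [AddMonoidAlgebra.lift_single]; simp

lemma ev_C (a : ℤ) : ev (C a) = a := by
  show AddMonoidAlgebra.lift ℤ ℤ ℤ 1 (AddMonoidAlgebra.single 0 a) = a
  rw [AddMonoidAlgebra.lift_single]; simp

lemma ev_invert (f : LaurentPolynomial ℤ) : ev (invert f) = ev f := by
  induction f using LaurentPolynomial.induction_on' with
  | add p q hp hq => simp only [map_add, hp, hq]
  | C_mul_T n a => simp only [map_mul, invert_T, invert_C, ev_T, ev_C]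

lemma one_sub_T_ne_zero : (1 : LaurentPolynomial ℤ) - T 1 ≠ 0 := by
  rw [sub_ne_zero]
  intro h
  have h2 : (Polynomial.toLaurent (1 : Polynomial ℤ)) = Polynomial.toLaurent Polynomial.X := by
    rw [Polynomial.toLaurent_one, Polynomial.toLaurent_X]; exact h
  have := Polynomial.toLaurent_injective h2
  simpa using congrArg Polynomial.natDegree this

lemma dvd_one_sub_T (n : ℤ) : ((1 : LaurentPolynomial ℤ) - T 1) ∣ (1 - T n) := by
  induction n using Int.induction_on with
  | zero => simp [T_zero]
  | succ k ih =>
      have key : (1 : LaurentPolynomial ℤ) - T ((k : ℤ) + 1)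
          = (1 - T (k : ℤ)) + T (k : ℤ) * (1 - T 1) := by
        rw [mul_sub, mul_one, ← T_add]; ring
      rw [key]
      exact dvd_add ih (dvd_mul_left _ _)
  | pred k ih =>
      have key : (1 : LaurentPolynomial ℤ) - T (-(k : ℤ) - 1)
          = (1 - T (-(k : ℤ))) - T (-(k : ℤ) - 1) * (1 - T 1) := by
        rw [mul_sub, mul_one, ← T_add]
        rw [show (-(k : ℤ) - 1) + 1 = -(k : ℤ) by ring]
        ring
      rw [key]
      exact dvd_sub ih (dvd_mul_left _ _)

lemma sub_C_ev_dvd (f : LaurentPolynomial ℤ) :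
    ((1 : LaurentPolynomial ℤ) - T 1) ∣ (f - C (ev f)) := by
  induction f using LaurentPolynomial.induction_on' with
  | add p q hp hq =>
      have : p + q - C (ev (p + q)) = (p - C (ev p)) + (q - C (ev q)) := by
        rw [map_add, map_add]; ring
      rw [this]; exact dvd_add hp hq
  | C_mul_T n a =>
      have : C a * T n - C (ev (C a * T n)) = -(C a * (1 - T n)) := by
        rw [map_mul, ev_T, ev_C, mul_one]; ring
      rw [this]
      exact ((dvd_one_sub_T n).mul_left (C a)).neg_right

/-- The set `𝒬_m(W)` of exponential quasi-invariants,
`𝒬_m(W) = {f ∈ ℤ[z,z⁻¹] : (1-z)^(2m) divides (f(z) - f(z⁻¹))/(1-z²)}`,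
is a subring of `ℤ[z,z⁻¹]`, and `𝒬_{m+1}(W) = ℤ + (z + z⁻¹ - 2)⬝𝒬_m(W)`. -/
theorem stmt_10 (m : ℕ) (Q : ℕ → Set (LaurentPolynomial ℤ))
    (hQ : ∀ n : ℕ, ∀ f : LaurentPolynomial ℤ, f ∈ Q n ↔
      ∃ g : LaurentPolynomial ℤ,
        f - LaurentPolynomial.invert f = (1 - T 2) * g ∧ (1 - T 1) ^ (2 * n) ∣ g) :
    (∃ S : Subring (LaurentPolynomial ℤ), (S : Set (LaurentPolynomial ℤ)) = Q m) ∧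
    (∀ f : LaurentPolynomial ℤ, f ∈ Q (m + 1) ↔
      ∃ (c : ℤ) (g : LaurentPolynomial ℤ), g ∈ Q m ∧
        f = (c : LaurentPolynomial ℤ) + (T 1 + T (-1) - 2) * g) := by
  have h1 : (T (-1) : LaurentPolynomial ℤ) * T 1 = 1 := by
    rw [← T_add]; norm_num [T_zero]
  have h2 : (T (-1) : LaurentPolynomial ℤ) * T 1 * T 1 = T 1 := by rw [h1, one_mul]
  have hT2v : (T 1 : LaurentPolynomial ℤ) * T 1 = T 2 := by
    rw [← T_add]; norm_num
  have hI : T (-1) * ((1 : LaurentPolynomial ℤ) - T 1) ^ 2 = T 1 + T (-1) - 2 := by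
    linear_combination (-2 : LaurentPolynomial ℤ) * h1 + h2
  have hT2dec : (1 : LaurentPolynomial ℤ) - T 2 = (1 - T 1) * (1 + T 1) := by
    linear_combination hT2v
  have hJ : (1 : LaurentPolynomial ℤ) - T (-1) = -(T (-1) * (1 - T 1)) := by
    linear_combination -h1
  constructor
  · -- subring part
    have hone : (1 : LaurentPolynomial ℤ) ∈ Q m := (hQ m 1).2 ⟨0, by simp, dvd_zero _⟩
    have hzero : (0 : LaurentPolynomial ℤ) ∈ Q m := (hQ m 0).2 ⟨0, by simp, dvd_zero _⟩
    have hadd : ∀ {a b : LaurentPolynomial ℤ}, a ∈ Q m → b ∈ Q m → a + b ∈ Q m := by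
      rintro a b ha hb
      obtain ⟨ga, ea, da⟩ := (hQ m a).1 ha
      obtain ⟨gb, eb, db⟩ := (hQ m b).1 hb
      refine (hQ m _).2 ⟨ga + gb, ?_, dvd_add da db⟩
      rw [map_add]; linear_combination ea + eb
    have hneg : ∀ {a : LaurentPolynomial ℤ}, a ∈ Q m → -a ∈ Q m := by
      rintro a ha
      obtain ⟨ga, ea, da⟩ := (hQ m a).1 ha
      refine (hQ m _).2 ⟨-ga, ?_, da.neg_right⟩
      rw [map_neg]; linear_combination -ea
    have hmul : ∀ {a b : LaurentPolynomial ℤ}, a ∈ Q m → b ∈ Q m → a * b ∈ Q m := by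
      rintro a b ha hb
      obtain ⟨ga, ea, da⟩ := (hQ m a).1 ha
      obtain ⟨gb, eb, db⟩ := (hQ m b).1 hb
      refine (hQ m _).2 ⟨a * gb + invert b * ga, ?_, dvd_add (db.mul_left a) (da.mul_left _)⟩
      rw [map_mul]
      linear_combination a * eb + invert b * ea
    exact ⟨{ carrier := Q m
             one_mem' := hone
             zero_mem' := hzero
             add_mem' := hadd
             neg_mem' := hneg
             mul_mem' := hmul }, rfl⟩
  · intro f
    constructor
    · -- forward direction
      intro hf
      obtain ⟨w, e, k, hk⟩ := (hQ (m + 1) f).1 hf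
      rw [hk] at e
      set c : ℤ := ev f with hc
      obtain ⟨h, hh⟩ := sub_C_ev_dvd f
      have hhi : invert f - C c = (1 - T (-1)) * invert h := by
        have := congrArg invert hh
        simpa only [map_sub, map_mul, map_one, invert_T, invert_C] using this
      have hfX : f - invert f = (1 - T 1) * (h + T (-1) * invert h) := by
        linear_combination hh - hhi - invert h * hJ
      have e' : f - invert f
          = (1 - T 1) * ((1 - T 1) ^ 2 * ((1 - T 1) ^ (2 * m) * ((1 + T 1) * k))) := by
        rw [e, hT2dec, show 2 * (m + 1) = 2 * m + 2 by omega, pow_add]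
        ring
      have E2 : h + T (-1) * invert h
          = (1 - T 1) ^ 2 * ((1 - T 1) ^ (2 * m) * ((1 + T 1) * k)) :=
        mul_left_cancel₀ one_sub_T_ne_zero (by linear_combination e' - hfX)
      have hev : ev h = 0 := by
        have := congrArg ev E2
        simp only [map_add, map_mul, map_sub, map_pow, map_one, ev_T, ev_invert] at this
        simpa using this
      obtain ⟨h₂, hh2⟩ := sub_C_ev_dvd h
      rw [hev, map_zero, sub_zero] at hh2
      have hC : (C c : LaurentPolynomial ℤ) = (c : LaurentPolynomial ℤ) := by
        simpa using map_intCast (LaurentPolynomial.C : ℤ →+* LaurentPolynomial ℤ) c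
      set g : LaurentPolynomial ℤ := T 1 * h₂ with hg
      have hf_eq : f = (c : LaurentPolynomial ℤ) + (T 1 + T (-1) - 2) * g := by
        rw [hg]
        linear_combination hh + (1 - T 1) * hh2 + hC + (T 1 * h₂) * hI
          - ((1 - T 1) ^ 2 * h₂) * h1
      have hinv : invert f = (c : LaurentPolynomial ℤ) + (T 1 + T (-1) - 2) * invert g := by
        rw [hf_eq]
        simp only [map_add, map_mul, map_sub, map_intCast, invert_T, map_ofNat]
        ring
      have hfg : f - invert f = (T 1 + T (-1) - 2) * (g - invert g) := by
        linear_combination hf_eq - hinv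
      have e2' : f - invert f
          = (1 - T 1) ^ 2 * ((1 - T 1) ^ (2 * m) * ((1 - T 2) * k)) := by
        rw [e, show 2 * (m + 1) = 2 * m + 2 by omega]
        rw [show (1 - T 1 : LaurentPolynomial ℤ) ^ (2 * m + 2)
            = (1 - T 1) ^ (2 * m) * (1 - T 1) ^ 2 from by rw [← pow_add]]
        ring
      have E3 : T (-1) * (g - invert g) = (1 - T 1) ^ (2 * m) * ((1 - T 2) * k) :=
        mul_left_cancel₀ (pow_ne_zero 2 one_sub_T_ne_zero)
          (by linear_combination (g - invert g) * hI - hfg + e2')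
      have hgQ : g ∈ Q m := by
        refine (hQ m g).2 ⟨T 1 * ((1 - T 1) ^ (2 * m) * k), ?_, ⟨T 1 * k, by ring⟩⟩
        linear_combination T 1 * E3 - (g - invert g) * h1
      exact ⟨c, g, hgQ, hf_eq⟩
    · -- backward direction
      rintro ⟨c, g, hg, rfl⟩
      obtain ⟨w, e0, k, hk⟩ := (hQ m g).1 hg
      rw [hk] at e0
      have hinv : invert ((c : LaurentPolynomial ℤ) + (T 1 + T (-1) - 2) * g)
          = (c : LaurentPolynomial ℤ) + (T 1 + T (-1) - 2) * invert g := by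
        simp only [map_add, map_mul, map_sub, map_intCast, invert_T, map_ofNat]
        ring
      refine (hQ (m + 1) _).2
        ⟨T (-1) * ((1 - T 1) ^ 2 * ((1 - T 1) ^ (2 * m) * k)), ?_, ⟨T (-1) * k, ?_⟩⟩
      · rw [hinv]
        linear_combination (T 1 + T (-1) - 2) * e0
          - ((1 - T 2) * ((1 - T 1) ^ (2 * m) * k)) * hI
      · rw [show 2 * (m + 1) = 2 * m + 2 by omega]
        rw [show (1 - T 1 : LaurentPolynomial ℤ) ^ (2 * m + 2)
            = (1 - T 1) ^ (2 * m) * (1 - T 1) ^ 2 from by rw [← pow_add]]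
        ring
end

section
/- With A_m as above and u = t^2/(1+t) ∈ Z[[t]], the ring A_m is isomorphic to the completion of the exponential quasi-invariant ring 𝒬_m at the ideal generated by z + z^{-1} - 2, under the identification z = 1 + t. -/
open LaurentPolynomial

open PowerSeries

local notation "PS" => PowerSeries ℤ
local notation "XX" => (PowerSeries.X : PowerSeries ℤ)
local notation "LP" => LaurentPolynomial ℤ

noncomputable section




lemma st13_isUnit_one_add_X : IsUnit (1 + XX) := by
  rw [PowerSeries.isUnit_iff_constantCoeff]
  simp

def st13V : (PowerSeries ℤ)ˣ := st13_isUnit_one_add_X.unit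

lemma st13V_val : (st13V : PS) = 1 + XX := st13_isUnit_one_add_X.unit_spec

def st13phi : LaurentPolynomial ℤ →ₐ[ℤ] PS :=
  AddMonoidAlgebra.lift ℤ PS ℤ
    ((Units.coeHom PS).comp (zpowersHom (PowerSeries ℤ)ˣ st13V))

lemma st13phi_T (n : ℤ) : st13phi (T n) = ((st13V ^ n : (PowerSeries ℤ)ˣ) : PS) := by
  rw [st13phi, T, AddMonoidAlgebra.lift_single]
  simp
  exact one_smul ℤ _




lemma st13phi_T1 : st13phi (T 1) = 1 + XX := by
  rw [st13phi_T, zpow_one, st13V_val]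

lemma st13_Vinv_mul : ((st13V⁻¹ : (PowerSeries ℤ)ˣ) : PS) * (1 + XX) = 1 := by
  rw [← st13V_val]; exact_mod_cast st13V.inv_mul

lemma st13phi_Tneg : st13phi (T (-1)) = ((st13V⁻¹ : (PowerSeries ℤ)ˣ) : PS) := by
  rw [st13phi_T, zpow_neg_one]

lemma st13phi_w_mul : st13phi (T 1 + T (-1) - 2) * (1 + XX) = XX ^ 2 := by
  rw [map_sub, map_add, st13phi_T1, st13phi_Tneg, map_ofNat]
  have expand : ((1+XX) + ((st13V⁻¹ : (PowerSeries ℤ)ˣ) : PS) - 2) * (1+XX)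
      = (1+XX)^2 + ((st13V⁻¹ : (PowerSeries ℤ)ˣ) : PS)*(1+XX) - 2*(1+XX) := by ring
  rw [expand, st13_Vinv_mul]; ring


/-- coercion ℤ[X] → ℤ[[X]] as an AlgHom -/
def st13coeA : Polynomial ℤ →ₐ[ℤ] PS :=
  { Polynomial.coeToPowerSeries.ringHom with
    commutes' := fun r => by simp }

lemma st13coeA_apply (p : Polynomial ℤ) : st13coeA p = (p : PS) := rfl

lemma st13coe_aeval (p : Polynomial ℤ) (q : Polynomial ℤ) :
    ((Polynomial.aeval q p : Polynomial ℤ) : PS) = Polynomial.aeval (q : PS) p := by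
  exact (Polynomial.aeval_algHom_apply st13coeA q p).symm

lemma st13phi_toLaurent (p : Polynomial ℤ) :
    st13phi (Polynomial.toLaurent p) = ((Polynomial.aeval (Polynomial.X + 1) p : Polynomial ℤ) : PS) := by
  rw [st13coe_aeval]
  have h1 : st13phi.comp Polynomial.toLaurentAlg = Polynomial.aeval ((Polynomial.X + 1 : Polynomial ℤ) : PS) := by
    apply Polynomial.algHom_ext
    simp [Polynomial.toLaurentAlg_apply, Polynomial.toLaurent_X, st13phi_T1,
      Polynomial.coe_add, Polynomial.coe_X, Polynomial.coe_one, add_comm]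
  calc st13phi (Polynomial.toLaurent p) = (st13phi.comp Polynomial.toLaurentAlg) p := by
        simp [Polynomial.toLaurentAlg_apply]
    _ = _ := by rw [h1]


lemma st13_coe_X_pow_dvd (q : Polynomial ℤ) (k : ℕ) (h : XX ^ k ∣ (q : PS)) :
    (Polynomial.X : Polynomial ℤ) ^ k ∣ q := by
  rw [Polynomial.X_pow_dvd_iff]
  intro d hd
  have := (PowerSeries.X_pow_dvd_iff.1 h) d hd
  rwa [Polynomial.coeff_coe] at this

/-- undo the substitution X ↦ X+1 -/
lemma st13_unsub (p : Polynomial ℤ) :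
    Polynomial.aeval (Polynomial.X - 1 : Polynomial ℤ) (Polynomial.aeval (Polynomial.X + 1 : Polynomial ℤ) p) = p := by
  have h := Polynomial.aeval_algHom_apply (Polynomial.aeval (Polynomial.X - 1 : Polynomial ℤ))
    (Polynomial.X + 1 : Polynomial ℤ) p
  rw [← h]
  simp

/-- Key divisibility transfer: if `X^(2k) ∣ φ g` then `w^k ∣ g`. -/
lemma st13_w_pow_dvd (g : LP) (k : ℕ) (h : XX ^ (2 * k) ∣ st13phi g) :
    (T 1 + T (-1) - 2 : LP) ^ k ∣ g := by
  obtain ⟨N, p, hp⟩ := LaurentPolynomial.exists_T_pow g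
  have h2 : XX ^ (2 * k) ∣ st13phi (Polynomial.toLaurent p) := by
    rw [hp, map_mul]; exact Dvd.dvd.mul_right h _
  rw [st13phi_toLaurent] at h2
  obtain ⟨r, hr⟩ := st13_coe_X_pow_dvd _ _ h2
  have hp2 : p = (Polynomial.X - 1) ^ (2 * k) * Polynomial.aeval (Polynomial.X - 1 : Polynomial ℤ) r := by
    conv_lhs => rw [← st13_unsub p, hr]
    rw [map_mul, map_pow, Polynomial.aeval_X]
  -- (T 1 - 1)^(2k) ∣ g
  have hTdvd : ((T 1 - 1 : LP)) ^ (2 * k) ∣ g := by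
    refine ⟨Polynomial.toLaurent (Polynomial.aeval (Polynomial.X - 1 : Polynomial ℤ) r) * T (-(N:ℤ)), ?_⟩
    have : g = Polynomial.toLaurent p * T (-(N:ℤ)) := by
      rw [hp, mul_assoc, ← T_add]
      simp
    rw [this, hp2]
    push_cast [map_mul, map_pow, map_sub, Polynomial.toLaurent_X, Polynomial.toLaurent_one]
    ring
  -- w^k * T k = (T 1 - 1)^(2k)
  have e1 : (T 1 * T 1 : LP) = T 2 := by rw [← T_add]; norm_num
  have e2 : (T (-1) * T 1 : LP) = 1 := by rw [← T_add]; norm_num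
  have e3 : (T (-1) * T 2 : LP) = T 1 := by rw [← T_add]; norm_num
  have hw : (T 1 + T (-1) - 2 : LP) = T (-1) * (T 1 - 1) ^ 2 := by
    calc (T 1 + T (-1) - 2 : LP)
        = T (-1) * T 2 + T (-1) - 2 * (T (-1) * T 1) := by rw [e2, e3]; ring
      _ = T (-1) * (T 1 - 1) ^ 2 := by rw [← e1]; ring
  have hTk : (T (-1 : ℤ) : LP) ^ k * T (k : ℤ) = 1 := by
    rw [T_pow, ← T_add]
    norm_num
  have hwk : (T 1 + T (-1) - 2 : LP) ^ k * T (k : ℤ) = (T 1 - 1) ^ (2 * k) := by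
    rw [hw, mul_pow]
    calc T (-1 : ℤ) ^ k * ((T 1 - 1 : LP) ^ 2) ^ k * T (k : ℤ)
        = (T (-1 : ℤ) ^ k * T (k : ℤ)) * ((T 1 - 1 : LP) ^ 2) ^ k := by ring
      _ = (T 1 - 1) ^ (2 * k) := by rw [hTk, one_mul, ← pow_mul]
  obtain ⟨c, hc⟩ := hTdvd
  refine ⟨T (k : ℤ) * c, ?_⟩
  rw [hc, ← mul_assoc, hwk]

lemma st13phi_injective : Function.Injective st13phi := by
  intro a b hab
  have h0 : st13phi (a - b) = 0 := by rw [map_sub, hab, sub_self]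
  obtain ⟨N, p, hp⟩ := LaurentPolynomial.exists_T_pow (a - b)
  have h2 : st13phi (Polynomial.toLaurent p) = 0 := by
    rw [hp, map_mul, h0, zero_mul]
  rw [st13phi_toLaurent] at h2
  have h3 : (Polynomial.aeval (Polynomial.X + 1 : Polynomial ℤ) p : Polynomial ℤ) = 0 :=
    (Polynomial.coe_eq_zero_iff).1 h2
  have h4 : p = 0 := by
    have := st13_unsub p
    rw [h3, map_zero] at this
    exact this.symm
  have h5 : a - b = 0 := by
    have : a - b = Polynomial.toLaurent p * T (-(N:ℤ)) := by
      rw [hp, mul_assoc, ← T_add]; simp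
    rw [this, h4, map_zero, zero_mul]
  exact sub_eq_zero.1 h5



variable {m : ℕ} {u : PS} {B : Subring PS} {S : Subring LP}

lemma st13_u_eq (hu : u * (1 + XX) = XX ^ 2) :
    u = XX ^ 2 * ((st13V⁻¹ : (PowerSeries ℤ)ˣ) : PS) := by
  calc u = u * (((1 + XX)) * ((st13V⁻¹ : (PowerSeries ℤ)ˣ) : PS)) := by
        rw [mul_comm (1+XX), st13_Vinv_mul, mul_one]
    _ = XX ^ 2 * ((st13V⁻¹ : (PowerSeries ℤ)ˣ) : PS) := by rw [← mul_assoc, hu]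

lemma st13_u_ne_zero (hu : u * (1 + XX) = XX ^ 2) : u ≠ 0 := by
  intro h
  have h2 : (XX : PS) ^ 2 = 0 := by rw [← hu, h, zero_mul]
  exact pow_ne_zero 2 PowerSeries.X_ne_zero h2

lemma st13_X_pow_eq (hu : u * (1 + XX) = XX ^ 2) (n : ℕ) :
    XX ^ (2 * n) = u ^ n * (1 + XX) ^ n := by
  rw [pow_mul, ← hu, mul_pow]

lemma st13_u_pow_eq (hu : u * (1 + XX) = XX ^ 2) (n : ℕ) :
    u ^ n = XX ^ (2 * n) * ((st13V⁻¹ : (PowerSeries ℤ)ˣ) : PS) ^ n := by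
  conv_lhs => rw [st13_u_eq hu]
  rw [mul_pow, ← pow_mul]

lemma st13_X_pow_dvd_u_pow (hu : u * (1 + XX) = XX ^ 2) (n : ℕ) (c : PS) :
    XX ^ (2 * n) ∣ u ^ n * c := by
  refine ⟨((st13V⁻¹ : (PowerSeries ℤ)ˣ) : PS) ^ n * c, ?_⟩
  rw [st13_u_pow_eq hu n]
  ring

lemma st13phi_w (hu : u * (1 + XX) = XX ^ 2) : st13phi (T 1 + T (-1) - 2) = u :=
  st13_isUnit_one_add_X.mul_right_cancel (by rw [st13phi_w_mul, hu])

lemma st13_um_mem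
    (hB : ∀ f : PS, f ∈ B ↔ ∃ (c : Fin m → ℤ) (g : PS),
        f = (∑ i : Fin m, (c i : PS) * u ^ (i : ℕ)) + u ^ m * g)
    (g : PS) : u ^ m * g ∈ B := by
  refine (hB _).2 ⟨0, g, ?_⟩
  simp

lemma st13phi_sum (hu : u * (1 + XX) = XX ^ 2) (c : Fin m → ℤ) (g : LP) :
    st13phi ((∑ i : Fin m, (c i : LP) * (T 1 + T (-1) - 2) ^ (i : ℕ)) +
          (T 1 + T (-1) - 2) ^ m * g)
      = (∑ i : Fin m, (c i : PS) * u ^ (i : ℕ)) + u ^ m * st13phi g := by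
  rw [map_add, map_sum, map_mul, map_pow, st13phi_w hu]
  congr 1
  refine Finset.sum_congr rfl fun i _ => ?_
  rw [map_mul, map_pow, st13phi_w hu, map_intCast]

lemma st13phi_mem_B (hu : u * (1 + XX) = XX ^ 2)
    (hB : ∀ f : PS, f ∈ B ↔ ∃ (c : Fin m → ℤ) (g : PS),
        f = (∑ i : Fin m, (c i : PS) * u ^ (i : ℕ)) + u ^ m * g)
    (hS : ∀ f : LP, f ∈ S ↔ ∃ (c : Fin m → ℤ) (g : LP),
        f = (∑ i : Fin m, (c i : LP) * (T 1 + T (-1) - 2) ^ (i : ℕ)) +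
          (T 1 + T (-1) - 2) ^ m * g)
    {s : LP} (hs : s ∈ S) : st13phi s ∈ B := by
  obtain ⟨c, g, rfl⟩ := (hS s).1 hs
  rw [st13phi_sum hu]
  exact (hB _).2 ⟨c, st13phi g, rfl⟩

lemma st13_Bpp (hu : u * (1 + XX) = XX ^ 2) :
    ∀ (n : ℕ) (g : LP) (b : PS), st13phi g = u ^ n * b →
    ∃ g' : LP, g = (T 1 + T (-1) - 2) ^ n * g' ∧ st13phi g' = b := by
  intro n
  induction n with
  | zero => exact fun g b hg => ⟨g, by rw [pow_zero, one_mul], by rwa [pow_zero, one_mul] at hg⟩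
  | succ n ih =>
    intro g b hg
    have hdvd : XX ^ (2 * 1) ∣ st13phi g :=
      ⟨((st13V⁻¹ : (PowerSeries ℤ)ˣ) : PS) * (u ^ n * b), by
        rw [hg, st13_u_eq hu]
        ring⟩
    obtain ⟨g₁, hg₁⟩ := st13_w_pow_dvd g 1 hdvd
    rw [pow_one] at hg₁
    have hphig₁ : st13phi g₁ = u ^ n * b := by
      have h2 : u * st13phi g₁ = u * (u ^ n * b) := by
        have h3 : st13phi g = u * st13phi g₁ := by rw [hg₁, map_mul, st13phi_w hu]
        rw [← h3, hg, pow_succ]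
        ring
      exact mul_left_cancel₀ (st13_u_ne_zero hu) h2
    obtain ⟨g', hg', hphi⟩ := ih g₁ b hphig₁
    exact ⟨g', by rw [hg₁, hg', pow_succ]; ring, hphi⟩

lemma st13_D (hu : u * (1 + XX) = XX ^ 2)
    (hB : ∀ f : PS, f ∈ B ↔ ∃ (c : Fin m → ℤ) (g : PS),
        f = (∑ i : Fin m, (c i : PS) * u ^ (i : ℕ)) + u ^ m * g)
    (hS : ∀ f : LP, f ∈ S ↔ ∃ (c : Fin m → ℤ) (g : LP),
        f = (∑ i : Fin m, (c i : LP) * (T 1 + T (-1) - 2) ^ (i : ℕ)) +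
          (T 1 + T (-1) - 2) ^ m * g)
    {g : LP} (hg : st13phi g ∈ B) : g ∈ S := by
  obtain ⟨c, h, hgb⟩ := (hB _).1 hg
  have hq : st13phi (g - ∑ i : Fin m, (c i : LP) * (T 1 + T (-1) - 2) ^ (i : ℕ))
      = u ^ m * h := by
    rw [map_sub, hgb]
    have h3 : st13phi (∑ i : Fin m, (c i : LP) * (T 1 + T (-1) - 2) ^ (i : ℕ))
        = ∑ i : Fin m, (c i : PS) * u ^ (i : ℕ) := by
      rw [map_sum]
      refine Finset.sum_congr rfl fun i _ => ?_
      rw [map_mul, map_pow, st13phi_w hu, map_intCast]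
    rw [h3]
    ring
  have hdvd : XX ^ (2 * m) ∣
      st13phi (g - ∑ i : Fin m, (c i : LP) * (T 1 + T (-1) - 2) ^ (i : ℕ)) := by
    rw [hq]
    exact st13_X_pow_dvd_u_pow hu m h
  obtain ⟨g₂, hg₂⟩ := st13_w_pow_dvd _ m hdvd
  refine (hS g).2 ⟨c, g₂, ?_⟩
  rw [← hg₂]
  ring

lemma st13_G (hu : u * (1 + XX) = XX ^ 2)
    (hB : ∀ f : PS, f ∈ B ↔ ∃ (c : Fin m → ℤ) (g : PS),
        f = (∑ i : Fin m, (c i : PS) * u ^ (i : ℕ)) + u ^ m * g)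
    (hS : ∀ f : LP, f ∈ S ↔ ∃ (c : Fin m → ℤ) (g : LP),
        f = (∑ i : Fin m, (c i : LP) * (T 1 + T (-1) - 2) ^ (i : ℕ)) +
          (T 1 + T (-1) - 2) ^ m * g)
    {b : PS} (hb : b ∈ B) (n : ℕ) :
    ∃ s : LP, s ∈ S ∧ ∃ h : PS, b - st13phi s = u ^ (n + m) * h := by
  obtain ⟨c, g, rfl⟩ := (hB b).1 hb
  set g₁ : Polynomial ℤ := PowerSeries.trunc (2 * n) g with hg₁def
  have htr : XX ^ (2 * n) ∣ g - (g₁ : PS) := by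
    rw [PowerSeries.X_pow_dvd_iff]
    intro d hd
    rw [map_sub, Polynomial.coeff_coe, hg₁def, PowerSeries.coeff_trunc]
    simp [hd]
  obtain ⟨g₂, hg₂⟩ := htr
  set q : LP := Polynomial.aeval (T 1 - 1 : LP) g₁ with hqdef
  have hphiq : st13phi q = (g₁ : PS) := by
    rw [hqdef, ← Polynomial.aeval_algHom_apply st13phi (T 1 - 1 : LP) g₁]
    have h5 : st13phi (T 1 - 1 : LP) = XX := by
      rw [map_sub, st13phi_T1, map_one]
      ring
    rw [h5]
    have h6 := Polynomial.aeval_algHom_apply st13coeA Polynomial.X g₁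
    rw [Polynomial.aeval_X_left_apply] at h6
    have h7 : st13coeA Polynomial.X = XX := Polynomial.coe_X
    rw [h7] at h6
    exact h6
  refine ⟨(∑ i : Fin m, (c i : LP) * (T 1 + T (-1) - 2) ^ (i : ℕ)) +
      (T 1 + T (-1) - 2) ^ m * q, (hS _).2 ⟨c, q, rfl⟩, (1 + XX) ^ n * g₂, ?_⟩
  rw [st13phi_sum hu, hphiq]
  have h4 : (∑ i : Fin m, (c i : PS) * u ^ (i : ℕ)) + u ^ m * g -
      ((∑ i : Fin m, (c i : PS) * u ^ (i : ℕ)) + u ^ m * (g₁ : PS)) = u ^ m * (g - g₁) := by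
    ring
  rw [h4, hg₂, st13_X_pow_eq hu n, pow_add]
  ring

set_option synthInstance.maxHeartbeats 1000000 in
set_option maxHeartbeats 1000000 in
/-- With `w = z + z⁻¹ - 2`, the exponential quasi-invariant ring
`𝒬_m = ℤ + ℤw + ⋯ + ℤw^(m-1) + w^m⬝ℤ[z,z⁻¹]` completed at the ideal generated by `w`
is isomorphic, under the identification `z = 1 + t` (so `w = t²/(1+t)` in `ℤ[[t]]`),
to the ring `A_m = ℤ + ℤ⬝u + ⋯ + ℤ⬝u^(m-1) + u^m⬝ℤ[[t]] ⊆ ℤ[[t]]` with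
`u = t²/(1+t)`. -/
theorem stmt_13 (m : ℕ)
    (S : Subring (LaurentPolynomial ℤ))
    (hS : ∀ f : LaurentPolynomial ℤ, f ∈ S ↔
      ∃ (c : Fin m → ℤ) (g : LaurentPolynomial ℤ),
        f = (∑ i : Fin m, (c i : LaurentPolynomial ℤ) * (T 1 + T (-1) - 2) ^ (i : ℕ)) +
          (T 1 + T (-1) - 2) ^ m * g)
    (ω : S) (hω : (ω : LaurentPolynomial ℤ) = T 1 + T (-1) - 2)
    (u : PowerSeries ℤ) (hu : u * (1 + PowerSeries.X) = PowerSeries.X ^ 2)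
    (B : Subring (PowerSeries ℤ))
    (hB : ∀ f : PowerSeries ℤ, f ∈ B ↔
      ∃ (c : Fin m → ℤ) (g : PowerSeries ℤ),
        f = (∑ i : Fin m, (c i : PowerSeries ℤ) * u ^ (i : ℕ)) + u ^ m * g) :
    Nonempty ((AdicCompletion (Ideal.span {ω}) S) ≃+* B) := by
  classical
  set I : Ideal S := Ideal.span {ω} with hI
  -- membership in I^n • ⊤
  have hIn : ∀ (n : ℕ) (x : S), x ∈ (I ^ n • ⊤ : Submodule ↥S ↥S) ↔ ∃ y : S, x = ω ^ n * y := by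
    intro n x
    have h1 : (I ^ n • ⊤ : Ideal S) = I ^ n := by
      rw [smul_eq_mul, Ideal.mul_top]
    rw [show (I ^ n • ⊤ : Submodule ↥S ↥S) = (I ^ n • ⊤ : Ideal S) from rfl, h1, hI,
      Ideal.span_singleton_pow, Ideal.mem_span_singleton']
    constructor
    · rintro ⟨y, hy⟩; exact ⟨y, by rw [← hy, mul_comm]⟩
    · rintro ⟨y, hy⟩; exact ⟨y, by rw [hy, mul_comm]⟩
  -- Tool 1
  have tool1 : ∀ (n : ℕ) (a b : S),
      (Submodule.Quotient.mk a : S ⧸ (I ^ n • ⊤ : Submodule ↥S ↥S)) = Submodule.Quotient.mk b →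
      XX ^ (2 * n) ∣ st13phi (a : LP) - st13phi (b : LP) := by
    intro n a b hab
    rw [Submodule.Quotient.eq] at hab
    obtain ⟨y, hy⟩ := (hIn n (a - b)).1 hab
    have hy2 : (a : LP) - (b : LP) = (T 1 + T (-1) - 2 : LP) ^ n * (y : LP) := by
      have := congrArg (Subtype.val) hy
      push_cast at this
      rw [← hω]
      exact_mod_cast this
    rw [← map_sub, hy2, map_mul, map_pow, st13phi_w hu]
    exact st13_X_pow_dvd_u_pow hu n _
  -- Tool 2
  have tool2 : ∀ (n : ℕ) (a b : S),
      (∃ h : PS, st13phi (a : LP) - st13phi (b : LP) = u ^ (n + m) * h) →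
      (Submodule.Quotient.mk a : S ⧸ (I ^ n • ⊤ : Submodule ↥S ↥S)) = Submodule.Quotient.mk b := by
    intro n a b ⟨h, hh⟩
    rw [Submodule.Quotient.eq]
    have hphi : st13phi (↑a - ↑b : LP) = u ^ n * (u ^ m * h) := by
      rw [map_sub, hh, pow_add]
      ring
    obtain ⟨g', hg', hphig'⟩ := st13_Bpp hu n _ _ hphi
    have hg'S : g' ∈ S := st13_D hu hB hS (hphig' ▸ st13_um_mem hB h)
    refine (hIn n (a - b)).2 ⟨⟨g', hg'S⟩, ?_⟩
    apply Subtype.ext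
    push_cast
    rw [hω]
    exact hg'
  -- representatives
  choose rep hrep using fun (n : ℕ) (q : S ⧸ (I ^ n • ⊤ : Submodule ↥S ↥S)) =>
    Submodule.Quotient.mk_surjective _ q
  -- the underlying map of the equivalence
  set F0 : AdicCompletion I S → PS := fun x =>
    PowerSeries.mk fun k => PowerSeries.coeff k (st13phi ((rep (k+1) (x.val (k+1))) : LP))
    with hF0
  -- approximation property of F0
  have hJ : ∀ (x : AdicCompletion I S) (n : ℕ),
      XX ^ (2 * n) ∣ F0 x - st13phi ((rep n (x.val n)) : LP) := by
    intro x n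
    have key : ∀ (j N : ℕ), j ≤ N → ∀ d < 2 * j,
        PowerSeries.coeff d (st13phi ((rep j (x.val j)) : LP)) =
        PowerSeries.coeff d (st13phi ((rep N (x.val N)) : LP)) := by
      intro j N hjN d hd
      have hmk : (Submodule.Quotient.mk (rep j (x.val j)) :
          S ⧸ (I ^ j • ⊤ : Submodule ↥S ↥S)) = Submodule.Quotient.mk (rep N (x.val N)) := by
        have e : x.val j = AdicCompletion.transitionMap I ↥S hjN
            (Submodule.Quotient.mk (rep N (x.val N))) := by
          rw [hrep N]
          exact (x.property hjN).symm
        rw [hrep j, e]; rfl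
      have hdvd := tool1 j _ _ hmk
      have h0 := (PowerSeries.X_pow_dvd_iff.1 hdvd) d hd
      rw [map_sub, sub_eq_zero] at h0
      exact h0
    rw [PowerSeries.X_pow_dvd_iff]
    intro d hd
    have h1 : PowerSeries.coeff d (F0 x) =
        PowerSeries.coeff d (st13phi ((rep (d+1) (x.val (d+1))) : LP)) := by
      rw [hF0]
      simp
    rw [map_sub, h1,
      key (d+1) (max (d+1) n) (le_max_left _ _) d (by omega),
      ← key n (max (d+1) n) (le_max_right _ _) d (by omega), sub_self]
  -- equality from approximations
  have eqTool : ∀ a b : PS, (∀ n : ℕ, XX ^ (2 * n) ∣ a - b) → a = b := by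
    intro a b h
    have h2 : a - b = 0 := PowerSeries.ext fun d => by
      have := (PowerSeries.X_pow_dvd_iff.1 (h (d+1))) d (by omega)
      simpa using this
    exact sub_eq_zero.1 h2
  -- quotient arithmetic facts
  have hmk1 : ∀ n : ℕ, (1 : AdicCompletion I S).val n = (Submodule.Quotient.mk (1 : ↥S)) :=
    fun _ => rfl
  have hmk0 : ∀ n : ℕ, (0 : AdicCompletion I S).val n = (Submodule.Quotient.mk (0 : ↥S)) :=
    fun _ => rfl
  have hmkmul : ∀ (n : ℕ) (a b : ↥S),
      (Submodule.Quotient.mk (a * b) : S ⧸ (I ^ n • ⊤ : Submodule ↥S ↥S)) =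
        Submodule.Quotient.mk a * Submodule.Quotient.mk b := fun _ _ _ => rfl
  have hmkadd : ∀ (n : ℕ) (a b : ↥S),
      (Submodule.Quotient.mk (a + b) : S ⧸ (I ^ n • ⊤ : Submodule ↥S ↥S)) =
        Submodule.Quotient.mk a + Submodule.Quotient.mk b := fun _ _ _ => rfl
  -- F0 is multiplicative etc.
  have hFone : F0 1 = 1 := by
    apply eqTool; intro n
    have d1 := hJ 1 n
    have d2 : XX ^ (2*n) ∣ st13phi ((rep n ((1 : AdicCompletion I S).val n)) : LP) - 1 := by
      have h3 := tool1 n (rep n ((1 : AdicCompletion I S).val n)) 1 (by rw [hrep, hmk1])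
      simpa using h3
    have h4 := dvd_add d1 d2
    rwa [sub_add_sub_cancel] at h4
  have hFzero : F0 0 = 0 := by
    apply eqTool; intro n
    have d1 := hJ 0 n
    have d2 : XX ^ (2*n) ∣ st13phi ((rep n ((0 : AdicCompletion I S).val n)) : LP) - 0 := by
      have h3 := tool1 n (rep n ((0 : AdicCompletion I S).val n)) 0 (by rw [hrep, hmk0])
      simpa using h3
    have h4 := dvd_add d1 d2
    rwa [sub_add_sub_cancel] at h4
  have hFadd : ∀ x y, F0 (x + y) = F0 x + F0 y := by
    intro x y
    apply eqTool; intro n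
    have d1 := hJ (x + y) n
    have d2 := hJ x n
    have d3 := hJ y n
    have hmid : XX ^ (2*n) ∣ st13phi ((rep n ((x + y).val n)) : LP) -
        (st13phi ((rep n (x.val n)) : LP) + st13phi ((rep n (y.val n)) : LP)) := by
      have h3 := tool1 n (rep n ((x + y).val n)) (rep n (x.val n) + rep n (y.val n))
        (by rw [hrep, hmkadd, hrep, hrep, AdicCompletion.val_add_apply])
      have h5 : st13phi (((rep n (x.val n) + rep n (y.val n)) : ↥S) : LP) =
          st13phi ((rep n (x.val n)) : LP) + st13phi ((rep n (y.val n)) : LP) := by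
        push_cast
        rw [map_add]
      rwa [h5] at h3
    have h6 := dvd_add (dvd_add d1 hmid) (dvd_add (dvd_neg.2 d2) (dvd_neg.2 d3))
    have e : F0 (x + y) - st13phi ((rep n ((x + y).val n)) : LP) +
        (st13phi ((rep n ((x + y).val n)) : LP) -
          (st13phi ((rep n (x.val n)) : LP) + st13phi ((rep n (y.val n)) : LP))) +
        (-(F0 x - st13phi ((rep n (x.val n)) : LP)) +
          -(F0 y - st13phi ((rep n (y.val n)) : LP)))
        = F0 (x + y) - (F0 x + F0 y) := by ring
    rwa [e] at h6
  have hFmul : ∀ x y, F0 (x * y) = F0 x * F0 y := by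
    intro x y
    apply eqTool; intro n
    have d1 := hJ (x * y) n
    have d2 := hJ x n
    have d3 := hJ y n
    have hmid : XX ^ (2*n) ∣ st13phi ((rep n ((x * y).val n)) : LP) -
        (st13phi ((rep n (x.val n)) : LP) * st13phi ((rep n (y.val n)) : LP)) := by
      have h3 := tool1 n (rep n ((x * y).val n)) (rep n (x.val n) * rep n (y.val n))
        (by rw [hrep, hmkmul, hrep, hrep, AdicCompletion.val_mul])
      have h5 : st13phi (((rep n (x.val n) * rep n (y.val n)) : ↥S) : LP) =
          st13phi ((rep n (x.val n)) : LP) * st13phi ((rep n (y.val n)) : LP) := by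
        push_cast
        rw [map_mul]
      rwa [h5] at h3
    have hprod : XX ^ (2*n) ∣
        st13phi ((rep n (x.val n)) : LP) * st13phi ((rep n (y.val n)) : LP) - F0 x * F0 y := by
      have e2 : st13phi ((rep n (x.val n)) : LP) * st13phi ((rep n (y.val n)) : LP) -
          F0 x * F0 y
          = st13phi ((rep n (x.val n)) : LP) *
              -(F0 y - st13phi ((rep n (y.val n)) : LP)) +
            -(F0 x - st13phi ((rep n (x.val n)) : LP)) * F0 y := by ring
      rw [e2]
      exact dvd_add (Dvd.dvd.mul_left (dvd_neg.2 d3) _) (Dvd.dvd.mul_right (dvd_neg.2 d2) _)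
    have h6 := dvd_add d1 (dvd_add hmid hprod)
    have e : F0 (x * y) - st13phi ((rep n ((x * y).val n)) : LP) +
        (st13phi ((rep n ((x * y).val n)) : LP) -
          st13phi ((rep n (x.val n)) : LP) * st13phi ((rep n (y.val n)) : LP) +
         (st13phi ((rep n (x.val n)) : LP) * st13phi ((rep n (y.val n)) : LP) - F0 x * F0 y))
        = F0 (x * y) - F0 x * F0 y := by ring
    rwa [e] at h6
  -- injectivity
  have hinj : ∀ x : AdicCompletion I S, F0 x = 0 → x = 0 := by
    intro x hx
    ext n
    have d1 := hJ x (n + m)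
    rw [hx, zero_sub, dvd_neg] at d1
    obtain ⟨c, hc⟩ := d1
    have hphi0 : ∃ h : PS, st13phi ((rep (n+m) (x.val (n+m))) : LP) -
        st13phi (((0 : ↥S)) : LP) = u ^ (n + m) * h := by
      refine ⟨(1 + XX) ^ (n+m) * c, ?_⟩
      have h5 : st13phi (((0 : ↥S)) : LP) = 0 := by
        push_cast
        exact map_zero _
      rw [h5, sub_zero, hc, st13_X_pow_eq hu (n+m)]
      ring
    have h6 := tool2 n _ _ hphi0
    have h7 : x.val n = Submodule.Quotient.mk (rep (n+m) (x.val (n+m))) := by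
      have e2 : x.val n = AdicCompletion.transitionMap I ↥S (Nat.le_add_right n m)
          (Submodule.Quotient.mk (rep (n+m) (x.val (n+m)))) := by
        rw [hrep]
        exact (x.property _).symm
      rw [e2]; rfl
    rw [AdicCompletion.val_zero, h7, h6]
    simpa using (Submodule.Quotient.mk_eq_zero _).2 (Submodule.zero_mem _)
  -- range lands in B
  have hrange : ∀ x : AdicCompletion I S, F0 x ∈ B := by
    intro x
    obtain ⟨c, hc⟩ := hJ x m
    have h1 : F0 x = st13phi ((rep m (x.val m)) : LP) + u ^ m * ((1 + XX) ^ m * c) := by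
      have e := st13_X_pow_eq hu m
      calc F0 x = st13phi ((rep m (x.val m)) : LP) + XX ^ (2*m) * c := by rw [← hc]; ring
        _ = _ := by rw [e]; ring
    rw [h1]
    exact B.add_mem (st13phi_mem_B hu hB hS (rep m (x.val m)).2) (st13_um_mem hB _)
  -- surjectivity onto B
  have hsurj : ∀ b ∈ B, ∃ x : AdicCompletion I S, F0 x = b := by
    intro b hb
    choose s hmem h hh using fun n : ℕ => st13_G hu hB hS hb n
    have hcauchy : ∀ n : ℕ, (⟨s n, hmem n⟩ : ↥S) ≡ ⟨s (n+1), hmem (n+1)⟩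
        [SMOD (I ^ n • ⊤ : Submodule ↥S ↥S)] := by
      intro n
      rw [SModEq]
      apply tool2
      refine ⟨u * h (n+1) - h n, ?_⟩
      have e : st13phi (s n) - st13phi (s (n+1)) =
          (b - st13phi (s (n+1))) - (b - st13phi (s n)) := by ring
      rw [e, hh, hh]
      have e2 : (n+1) + m = (n + m) + 1 := by omega
      rw [e2, pow_succ]
      ring
    set cs : AdicCompletion.AdicCauchySequence I S :=
      AdicCompletion.AdicCauchySequence.mk I ↥S (fun n => ⟨s n, hmem n⟩) hcauchy with hcs
    refine ⟨AdicCompletion.mk I ↥S cs, ?_⟩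
    apply eqTool
    intro n
    have hval : (AdicCompletion.mk I ↥S cs).val n = Submodule.Quotient.mk (⟨s n, hmem n⟩ : ↥S) :=
      rfl
    have d1 := hJ (AdicCompletion.mk I ↥S cs) n
    have d2 : XX ^ (2*n) ∣ st13phi ((rep n ((AdicCompletion.mk I ↥S cs).val n)) : LP)
        - st13phi (s n) := by
      have h3 := tool1 n (rep n ((AdicCompletion.mk I ↥S cs).val n)) ⟨s n, hmem n⟩
        (by rw [hrep, hval])
      exact h3
    have d3 : XX ^ (2*n) ∣ st13phi (s n) - b := by
      have e : st13phi (s n) - b = -(u ^ (n+m) * h n) := by rw [← hh n]; ring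
      rw [e, dvd_neg, pow_add]
      have h9 := st13_X_pow_dvd_u_pow hu n (u ^ m * h n)
      rwa [← mul_assoc] at h9
    have h6 := dvd_add d1 (dvd_add d2 d3)
    rwa [sub_add_sub_cancel, sub_add_sub_cancel] at h6
  -- assemble the ring equivalence
  set F : AdicCompletion I S →+* PS :=
    { toFun := F0, map_one' := hFone, map_mul' := hFmul, map_zero' := hFzero,
      map_add' := hFadd } with hF
  have hrange' : ∀ x, F x ∈ B := hrange
  set Fr : AdicCompletion I S →+* B := F.codRestrict B hrange' with hFr
  have hbij : Function.Bijective Fr := by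
    constructor
    · intro a b hab
      have h9 : F a = F b := congrArg Subtype.val hab
      have h10 : F (a - b) = 0 := by rw [map_sub, h9, sub_self]
      exact sub_eq_zero.1 (hinj (a - b) h10)
    · rintro ⟨b, hb⟩
      obtain ⟨x, hx⟩ := hsurj b hb
      exact ⟨x, Subtype.ext hx⟩
  exact ⟨RingEquiv.ofBijective Fr hbij⟩

end
end

section
/- For the Tate-curve crossed product: the map f: Q[x] ×_{Q[x]/(x^{n+1})} Q[x] → Q[x] ⊗ Q[Z/2], (p,q) ↦ (p + q·s)/2, is an injective W-equivariant linear map whose image is Q[x]·e_0 + Q[x]·x^{n+1}·e_1, where e_0 = (1+s)/2, e_1 = (1-s)/2, and W = Z/2 acts on the fiber product by (p,q) ↦ (s(q), s(p)) with s(p)(x) = p(-x). -/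
open Polynomial

/-- The map `f : ℚ[x] ×_{ℚ[x]/(x^(n+1))} ℚ[x] → ℚ[x] ⊗ ℚ[ℤ/2]`, `(p,q) ↦ (p + q⬝s)/2`,
is an injective `W`-equivariant linear map whose image is
`ℚ[x]⬝e₀ + ℚ[x]⬝x^(n+1)⬝e₁`, where `e₀ = (1+s)/2`, `e₁ = (1-s)/2`, and `W = ℤ/2` acts
on the fiber product by `(p,q) ↦ (s(q), s(p))` with `s(p)(x) = p(-x)`, and on the group
algebra by `s⬝(f(x) ⊗ w) = f(-x) ⊗ s⬝w`. -/
theorem stmt_14 (n : ℕ)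
    (g : Multiplicative (ZMod 2)) (hg : g = Multiplicative.ofAdd (1 : ZMod 2))
    (F : ℚ[X] × ℚ[X] → MonoidAlgebra ℚ[X] (Multiplicative (ZMod 2)))
    (hF : ∀ pq : ℚ[X] × ℚ[X],
      F pq = MonoidAlgebra.single 1 (C (1/2 : ℚ) * pq.1) +
        MonoidAlgebra.single g (C (1/2 : ℚ) * pq.2))
    (τ : MonoidAlgebra ℚ[X] (Multiplicative (ZMod 2)) →+
          MonoidAlgebra ℚ[X] (Multiplicative (ZMod 2)))
    (hτ : ∀ a b : ℚ[X],
      τ (MonoidAlgebra.single 1 a + MonoidAlgebra.single g b) =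
        MonoidAlgebra.single 1 (aeval (-X : ℚ[X]) b) +
          MonoidAlgebra.single g (aeval (-X : ℚ[X]) a)) :
    -- f is injective (on the fiber product)
    Set.InjOn F {pq : ℚ[X] × ℚ[X] | (X : ℚ[X]) ^ (n + 1) ∣ pq.1 - pq.2} ∧
    -- f is W-equivariant
    (∀ p q : ℚ[X], τ (F (p, q)) = F (aeval (-X : ℚ[X]) q, aeval (-X : ℚ[X]) p)) ∧
    -- the image of the fiber product is ℚ[x]⬝e₀ + ℚ[x]⬝x^(n+1)⬝e₁
    (F '' {pq : ℚ[X] × ℚ[X] | (X : ℚ[X]) ^ (n + 1) ∣ pq.1 - pq.2} =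
      {x : MonoidAlgebra ℚ[X] (Multiplicative (ZMod 2)) |
        ∃ a b : ℚ[X],
          x = MonoidAlgebra.single 1 a *
                (MonoidAlgebra.single 1 (C (1/2 : ℚ)) +
                 MonoidAlgebra.single g (C (1/2 : ℚ))) +
              MonoidAlgebra.single 1 (b * X ^ (n + 1)) *
                (MonoidAlgebra.single 1 (C (1/2 : ℚ)) -
                 MonoidAlgebra.single g (C (1/2 : ℚ)))}) := by
  have hg1 : g ≠ 1 := by subst hg; decide
  have hC : (C (1/2 : ℚ) : ℚ[X]) ≠ 0 := C_ne_zero.mpr (by norm_num)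
  have h2 : (C (1/2 : ℚ) : ℚ[X]) * 2 = 1 := by
    rw [show (2 : ℚ[X]) = C 2 from (map_ofNat C 2).symm, ← C_mul]; norm_num
  have key : ∀ a b a' b' : ℚ[X],
      MonoidAlgebra.single (M := Multiplicative (ZMod 2)) 1 a + MonoidAlgebra.single g b =
      MonoidAlgebra.single 1 a' + MonoidAlgebra.single g b' → a = a' ∧ b = b' := by
    intro a b a' b' h
    have h' : (Finsupp.single 1 a + Finsupp.single g b : Multiplicative (ZMod 2) →₀ ℚ[X]) =
        Finsupp.single 1 a' + Finsupp.single g b' := congrArg MonoidAlgebra.coeff h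
    constructor
    · have := DFunLike.congr_fun h' 1
      simpa [Finsupp.add_apply, Finsupp.single_apply, hg1, Ne.symm hg1] using this
    · have := DFunLike.congr_fun h' g
      simpa [Finsupp.add_apply, Finsupp.single_apply, hg1, Ne.symm hg1] using this
  have hgg : g * g = 1 := by subst hg; decide
  have expand : ∀ a b : ℚ[X],
      MonoidAlgebra.single (M := Multiplicative (ZMod 2)) 1 a *
          (MonoidAlgebra.single 1 (C (1/2 : ℚ)) + MonoidAlgebra.single g (C (1/2 : ℚ))) +
        MonoidAlgebra.single 1 (b * X ^ (n + 1)) *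
          (MonoidAlgebra.single 1 (C (1/2 : ℚ)) - MonoidAlgebra.single g (C (1/2 : ℚ))) =
      MonoidAlgebra.single 1 (C (1/2 : ℚ) * (a + b * X ^ (n + 1))) +
        MonoidAlgebra.single g (C (1/2 : ℚ) * (a - b * X ^ (n + 1))) := by
    intro a b
    simp only [mul_add, mul_sub, MonoidAlgebra.single_mul_single, one_mul, mul_one]
    rw [show C (1/2 : ℚ) * a + C (1/2 : ℚ) * (b * X ^ (n + 1)) =
        a * C (1/2 : ℚ) + b * X ^ (n + 1) * C (1/2 : ℚ) by ring,
      show C (1/2 : ℚ) * a - C (1/2 : ℚ) * (b * X ^ (n + 1)) =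
        a * C (1/2 : ℚ) - b * X ^ (n + 1) * C (1/2 : ℚ) by ring]
    apply MonoidAlgebra.coeff_injective
    show (Finsupp.single 1 _ + Finsupp.single g _ +
        (Finsupp.single 1 _ - Finsupp.single g _) : Multiplicative (ZMod 2) →₀ ℚ[X]) =
      Finsupp.single 1 _ + Finsupp.single g _
    rw [Finsupp.single_add, Finsupp.single_sub]
    abel
  refine ⟨?_, ?_, ?_⟩
  · intro x hx y hy h
    rw [hF x, hF y] at h
    obtain ⟨h1, h2'⟩ := key _ _ _ _ h
    exact Prod.ext (mul_left_cancel₀ hC h1) (mul_left_cancel₀ hC h2')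
  · intro p q
    rw [hF (p, q), hτ, hF]
    simp [mul_comm]
  · ext z
    constructor
    · rintro ⟨⟨p, q⟩, hpq, rfl⟩
      obtain ⟨c, hc⟩ := hpq
      refine ⟨C (1/2 : ℚ) * (p + q), C (1/2 : ℚ) * c, ?_⟩
      rw [hF, expand]
      congr 1
      · congr 1
        linear_combination C (1/2 : ℚ) * C (1/2 : ℚ) * hc - C (1/2 : ℚ) * p * h2
      · congr 1
        linear_combination (-(C (1/2 : ℚ) * C (1/2 : ℚ))) * hc - C (1/2 : ℚ) * q * h2
    · rintro ⟨a, b, rfl⟩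
      refine ⟨(a + b * X ^ (n + 1), a - b * X ^ (n + 1)), ⟨2 * b, by ring⟩, ?_⟩
      rw [hF, expand]
end
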